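/- arXiv:2201.03733 — 3 statements merged into one kernel-verified Lean document; each statement's English description precedes it below -/
import Mathlib

section
/- Let d ≥ 0 and α ≥ 0 be real numbers, let s = a + ib ∈ ℂ with a > 0, and set S = 1 + d/(s+α) (the PML metric with γ = 1). Then Re( conj(sS) / S ) ≥ a; that is, Re(conj(sS)/S) = a + ε(s,d) for a nonnegative quantity ε(s,d) ≥ 0 that vanishes when d = 0. -/
open Complex ComplexConjugate

/- Since `conj (s * S) / S = conj s * conj S ^ 2 / |S| ^ 2`, the real part is
`Re s - 2 Im S (Re s Im S + Im s Re S) / |S| ^ 2`, and for the PML metric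
`Im S (Re s Im S + Im s Re S) = -d (Im s) ^ 2 (|s + α| ^ 2 + d α) / |s + α| ^ 4 ≤ 0`. -/

theorem re_conj_mul_div_self (s S : ℂ) (hS : S ≠ 0) :
    (conj (s * S) / S).re = s.re - 2 * S.im * (s.re * S.im + s.im * S.re) / normSq S := by
  have hn : normSq S ≠ 0 := normSq_eq_zero.not.mpr hS
  rw [div_re]
  simp only [map_mul, mul_re, mul_im, conj_re, conj_im]
  field_simp
  rw [normSq_apply]
  ring

theorem one_le_re_one_add_div (d : ℝ) (w : ℂ) (hd : 0 ≤ d) (hw : 0 ≤ w.re) :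
    1 ≤ (1 + (d : ℂ) / w).re := by
  rw [add_re, one_re, div_re, ofReal_re, ofReal_im, zero_mul, zero_div, add_zero,
    le_add_iff_nonneg_right]
  exact div_nonneg (mul_nonneg hd hw) (normSq_nonneg w)

theorem im_mul_pml_metric_nonpos (d α : ℝ) (s S : ℂ) (hd : 0 ≤ d) (hα : 0 ≤ α)
    (hS : S = 1 + (d : ℂ) / (s + α)) :
    S.im * (s.re * S.im + s.im * S.re) ≤ 0 := by
  set D := normSq (s + α)
  have hD : 0 ≤ D := normSq_nonneg _
  have h : S.im * (s.re * S.im + s.im * S.re) = -(d * s.im ^ 2 / D) * (1 + d * α / D) := by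
    simp only [hS, add_re, add_im, one_re, one_im, div_re, div_im, ofReal_re, ofReal_im]
    ring
  rw [h]
  exact mul_nonpos_of_nonpos_of_nonneg (neg_nonpos.mpr (by positivity)) (by positivity)

/-- For the PML metric `S = 1 + d/(s+α)` (γ = 1) with `s = a + ib`, `a > 0`:
`Re(conj(sS)/S) ≥ a`, indeed `Re(conj(sS)/S) = a + ε(s,d)` with `ε(s,d) ≥ 0`
vanishing when `d = 0`. -/
theorem pml_conj_sS_div_S_re (d α a b : ℝ) (hd : 0 ≤ d) (hα : 0 ≤ α) (ha : 0 < a)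
    (s : ℂ) (hs : s = (a : ℂ) + (b : ℂ) * Complex.I)
    (S : ℂ) (hS : S = 1 + (d : ℂ) / (s + (α : ℂ))) :
    a ≤ ((starRingEnd ℂ) (s * S) / S).re ∧
      ∃ ε : ℝ, 0 ≤ ε ∧ ((starRingEnd ℂ) (s * S) / S).re = a + ε ∧ (d = 0 → ε = 0) := by
  have hsa : s.re = a := by simp [hs]
  have hS0 : S ≠ 0 := by
    have h := one_le_re_one_add_div d (s + α) hd (by simp [hsa]; linarith)
    rw [← hS] at h
    rintro rfl
    rw [zero_re] at h
    linarith
  set ε := -2 * S.im * (s.re * S.im + s.im * S.re) / normSq S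
  have hε : 0 ≤ ε := by
    have h := im_mul_pml_metric_nonpos d α s S hd hα hS
    exact div_nonneg (by linarith) (normSq_nonneg S)
  have heq : (conj (s * S) / S).re = a + ε := by
    rw [re_conj_mul_div_self s S hS0, ← hsa]
    ring
  refine ⟨by linarith, ε, hε, heq, fun hd0 => ?_⟩
  simp [ε, hS, hd0]
end

section
/- (1D PML strip energy estimate in Laplace space.) Let P be a real symmetric positive definite m×m matrix, A a real symmetric m×m matrix, let d ≥ 0, α ≥ 0, γ > 0 be real, let s = a + ib ∈ ℂ with a > 0, and S = γ(1 + d/(s+α)). Let Ũ : [−1,1] → ℂ^m be continuously differentiable and F̃ : [−1,1] → ℂ^m continuous, satisfying the PML strip equation (sS)·Pˉ¹·Ũ(x) = A·Ũ′(x) + Pˉ¹·F̃(x) for all x ∈ [−1,1]. Define ‖G‖_P² = ∫_{−1}^{1} ½ G(x)† Pˉ¹ G(x) dx and BT = ¼( Ũ(1)†AŨ(1) − Ũ(−1)†AŨ(−1) ). Then Re(sS) ≥ aγ > 0 and Re(sS)·‖Ũ‖_P² ≤ ‖Ũ‖_P·‖F̃‖_P + BT. In particular, if BT ≤ 0 then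 ‖Ũ‖_P ≤ (1/(aγ))·‖F̃‖_P. -/
/-!
Pair the equation with `Ũ` in the `P⁻¹`-weighted product and take real parts. Since `P⁻¹` is
Hermitian, the left side is `Re(sS) ‖Ũ‖_P²`; since `A` is symmetric, `Re(Ũ† A Ũ′)` is half the
derivative of `Ũ† A Ũ`, so the flux term integrates to the boundary term `BT`; and the source term is
bounded by Cauchy–Schwarz. Finally `Re(sS) ≥ aγ` because
`Re (s / (s + α)) = (|s|² + α Re s) / |s + α|² ≥ 0`.
-/

open Matrix
open scoped ComplexOrder

noncomputable def pmlMetric (d α γ : ℝ) (s : ℂ) : ℂ := γ * (1 + d / (s + α))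

lemma Complex.re_div_add_ofReal_nonneg {s : ℂ} {α : ℝ} (hs : 0 ≤ s.re) (hα : 0 ≤ α) :
    0 ≤ (s / (s + α)).re := by
  rw [Complex.div_re]
  simp only [Complex.add_re, Complex.ofReal_re, Complex.add_im, Complex.ofReal_im, add_zero]
  have := Complex.normSq_nonneg (s + α)
  exact add_nonneg (div_nonneg (by positivity) this) (div_nonneg (mul_self_nonneg _) this)

lemma re_mul_pmlMetric (d α γ : ℝ) (s : ℂ) :
    (s * pmlMetric d α γ s).re = γ * s.re + γ * d * (s / (s + α)).re := by
  rw [pmlMetric, show s * (γ * (1 + d / (s + α))) = γ * s + (γ * d : ℝ) * (s / (s + α)) by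
    push_cast; ring]
  simp only [Complex.add_re, Complex.re_ofReal_mul]

lemma mul_re_le_re_mul_pmlMetric {d α γ : ℝ} {s : ℂ} (hd : 0 ≤ d) (hα : 0 ≤ α) (hγ : 0 ≤ γ)
    (hs : 0 ≤ s.re) : s.re * γ ≤ (s * pmlMetric d α γ s).re := by
  rw [re_mul_pmlMetric]
  have := Complex.re_div_add_ofReal_nonneg hs hα
  nlinarith [mul_nonneg (mul_nonneg hγ hd) this]

lemma le_sqrt_mul_sqrt_of_forall_quadratic_nonneg {a b c : ℝ}
    (h : ∀ t : ℝ, 0 ≤ a + 2 * b * t + c * t ^ 2) : b ≤ √a * √c := by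
  have hdisc : b ^ 2 ≤ a * c := by
    have := discrim_le_zero fun t => (h t).trans_eq (by ring : _ = c * (t * t) + 2 * b * t + a)
    rw [discrim] at this
    linarith
  calc b ≤ |b| := le_abs_self b
    _ ≤ √(a * c) := Real.abs_le_sqrt hdisc
    _ = √a * √c := Real.sqrt_mul (by simpa using h 0) c

lemma le_one_div_mul_of_mul_sq_le_mul {c x y : ℝ} (hc : 0 < c) (hx : 0 ≤ x) (hy : 0 ≤ y)
    (h : c * x ^ 2 ≤ x * y) : x ≤ 1 / c * y := by
  rw [one_div_mul_eq_div, le_div_iff₀ hc]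
  rcases hx.eq_or_lt with rfl | hx
  · simpa using hy
  · nlinarith

namespace Matrix

variable {n : Type*} [Fintype n]

lemma IsHermitian.star_star_dotProduct_mulVec {M : Matrix n n ℂ} (hM : M.IsHermitian)
    (u v : n → ℂ) : star (star u ⬝ᵥ M *ᵥ v) = star v ⬝ᵥ M *ᵥ u := by
  rw [star_dotProduct, star_star, star_mulVec, ← dotProduct_mulVec, hM.eq]

lemma IsHermitian.re_star_dotProduct_mulVec_comm {M : Matrix n n ℂ} (hM : M.IsHermitian)
    (u v : n → ℂ) : (star u ⬝ᵥ M *ᵥ v).re = (star v ⬝ᵥ M *ᵥ u).re := by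
  rw [← hM.star_star_dotProduct_mulVec u v, Complex.star_def, Complex.conj_re]

lemma IsHermitian.re_star_dotProduct_mulVec_add_smul {M : Matrix n n ℂ} (hM : M.IsHermitian)
    (u v : n → ℂ) (t : ℝ) :
    (star (u + (t : ℂ) • v) ⬝ᵥ M *ᵥ (u + (t : ℂ) • v)).re =
      (star u ⬝ᵥ M *ᵥ u).re + 2 * t * (star u ⬝ᵥ M *ᵥ v).re + t ^ 2 * (star v ⬝ᵥ M *ᵥ v).re := by
  simp only [star_add, star_smul, mulVec_add, mulVec_smul, add_dotProduct, dotProduct_add,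
    smul_dotProduct, dotProduct_smul, smul_eq_mul, Complex.add_re, Complex.star_def,
    Complex.conj_ofReal, Complex.re_ofReal_mul, hM.re_star_dotProduct_mulVec_comm v u]
  ring

lemma IsHermitian.re_mul_re_star_dotProduct_mulVec_self_of_eq {Q A : Matrix n n ℂ}
    (hQ : Q.IsHermitian) {z : ℂ} {u u' f : n → ℂ} (h : z • (Q *ᵥ u) = A *ᵥ u' + Q *ᵥ f) :
    z.re * (star u ⬝ᵥ Q *ᵥ u).re = (star u ⬝ᵥ A *ᵥ u').re + (star u ⬝ᵥ Q *ᵥ f).re := by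
  have him : (star u ⬝ᵥ Q *ᵥ u).im = 0 := by simpa using hQ.im_star_dotProduct_mulVec_self u
  simpa [dotProduct_add, Complex.mul_re, him] using congrArg (fun v => (star u ⬝ᵥ v).re) h

lemma PosSemidef.re_star_dotProduct_mulVec_nonneg {M : Matrix n n ℂ} (hM : M.PosSemidef)
    (u : n → ℂ) : 0 ≤ (star u ⬝ᵥ M *ᵥ u).re :=
  (Complex.nonneg_iff.mp (hM.dotProduct_mulVec_nonneg u)).1

omit [Fintype n] in
lemma IsSymm.isHermitian_map_ofReal {M : Matrix n n ℝ} (hM : M.IsSymm) :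
    (M.map Complex.ofReal).IsHermitian :=
  (isHermitian_iff_isSymm.mpr hM).map _ fun _ => (Complex.conj_ofReal _).symm

open scoped MatrixOrder Matrix.Norms.L2Operator in
lemma PosSemidef.map_ofReal {M : Matrix n n ℝ} (hM : M.PosSemidef) :
    (M.map Complex.ofReal).PosSemidef := by
  classical
  obtain ⟨B, rfl⟩ := CStarAlgebra.nonneg_iff_eq_star_mul_self.mp hM.nonneg
  change ((Bᴴ * B).map Complex.ofRealHom).PosSemidef
  rw [Matrix.map_mul, conjTranspose_map (Complex.ofRealHom : ℝ → ℂ)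
    fun _ => (Complex.conj_ofReal _).symm]
  exact posSemidef_conjTranspose_mul_self _

end Matrix

section Calculus

variable {n : Type*} [Fintype n] {u v : ℝ → n → ℂ} {u' v' : n → ℂ} {s : Set ℝ} {x : ℝ}

lemma HasDerivWithinAt.star_dotProduct_mulVec (M : Matrix n n ℂ) (hu : HasDerivWithinAt u u' s x)
    (hv : HasDerivWithinAt v v' s x) :
    HasDerivWithinAt (fun t => star (u t) ⬝ᵥ M *ᵥ v t)
      (star u' ⬝ᵥ M *ᵥ v x + star (u x) ⬝ᵥ M *ᵥ v') s x := by
  have hui := hasDerivWithinAt_pi.mp hu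
  have hvi := hasDerivWithinAt_pi.mp hv
  simp only [dotProduct, mulVec, Pi.star_apply, ← Finset.sum_add_distrib]
  exact HasDerivWithinAt.fun_sum fun i _ =>
    (hui i).star.mul (HasDerivWithinAt.fun_sum fun j _ => (hvi j).const_mul (M i j))

lemma HasDerivWithinAt.re_star_dotProduct_mulVec_self {M : Matrix n n ℂ} (hM : M.IsHermitian)
    (hu : HasDerivWithinAt u u' s x) :
    HasDerivWithinAt (fun t => (star (u t) ⬝ᵥ M *ᵥ u t).re)
      (2 * (star (u x) ⬝ᵥ M *ᵥ u').re) s x := by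
  have h : HasDerivWithinAt (fun t => (star (u t) ⬝ᵥ M *ᵥ u t).re)
      (star u' ⬝ᵥ M *ᵥ u x + star (u x) ⬝ᵥ M *ᵥ u').re s x :=
    Complex.reCLM.hasFDerivAt.comp_hasDerivWithinAt x (hu.star_dotProduct_mulVec M hu)
  rwa [Complex.add_re, hM.re_star_dotProduct_mulVec_comm u' (u x), ← two_mul] at h

end Calculus

section WeightedInner

open Set

variable {n : Type*} [Fintype n]

/-- `weightedInner (P⁻¹.map Complex.ofReal) (-1) 1 G G = ‖G‖_P²`. -/
noncomputable def weightedInner (Q : Matrix n n ℂ) (x₀ x₁ : ℝ) (G H : ℝ → n → ℂ) : ℝ :=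
  ∫ x in x₀..x₁, (1 / 2) * (star (G x) ⬝ᵥ Q *ᵥ H x).re

variable {Q A : Matrix n n ℂ} {x₀ x₁ : ℝ} {G H U U' F : ℝ → n → ℂ}

lemma intervalIntegrable_re_star_dotProduct_mulVec (M : Matrix n n ℂ) (hx : x₀ ≤ x₁)
    (hG : ContinuousOn G (Icc x₀ x₁)) (hH : ContinuousOn H (Icc x₀ x₁)) :
    IntervalIntegrable (fun x => (star (G x) ⬝ᵥ M *ᵥ H x).re) MeasureTheory.volume x₀ x₁ :=
  ContinuousOn.intervalIntegrable (by rw [uIcc_of_le hx]; fun_prop)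

lemma weightedInner_self_nonneg (hQ : Q.PosSemidef) (hx : x₀ ≤ x₁) (G : ℝ → n → ℂ) :
    0 ≤ weightedInner Q x₀ x₁ G G :=
  intervalIntegral.integral_nonneg hx fun _ _ =>
    mul_nonneg (by norm_num) (hQ.re_star_dotProduct_mulVec_nonneg _)

lemma weightedInner_add_smul (hQ : Q.IsHermitian) (hx : x₀ ≤ x₁)
    (hG : ContinuousOn G (Icc x₀ x₁)) (hH : ContinuousOn H (Icc x₀ x₁)) (t : ℝ) :
    weightedInner Q x₀ x₁ (G + (t : ℂ) • H) (G + (t : ℂ) • H) =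
      weightedInner Q x₀ x₁ G G + 2 * weightedInner Q x₀ x₁ G H * t +
        weightedInner Q x₀ x₁ H H * t ^ 2 := by
  have hGG := (intervalIntegrable_re_star_dotProduct_mulVec Q hx hG hG).const_mul (1 / 2)
  have hGH := (intervalIntegrable_re_star_dotProduct_mulVec Q hx hG hH).const_mul (1 / 2)
  have hHH := (intervalIntegrable_re_star_dotProduct_mulVec Q hx hH hH).const_mul (1 / 2)
  have hpt : ∀ x, (1 / 2) * (star ((G + (t : ℂ) • H) x) ⬝ᵥ Q *ᵥ (G + (t : ℂ) • H) x).re =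
      (1 / 2) * (star (G x) ⬝ᵥ Q *ᵥ G x).re + 2 * ((1 / 2) * (star (G x) ⬝ᵥ Q *ᵥ H x).re) * t +
        (1 / 2) * (star (H x) ⬝ᵥ Q *ᵥ H x).re * t ^ 2 := fun x => by
    rw [Pi.add_apply, Pi.smul_apply, hQ.re_star_dotProduct_mulVec_add_smul]
    ring
  simp only [weightedInner, hpt]
  rw [intervalIntegral.integral_add (hGG.add ((hGH.const_mul 2).mul_const t)) (hHH.mul_const _),
    intervalIntegral.integral_add hGG ((hGH.const_mul 2).mul_const t),
    intervalIntegral.integral_mul_const, intervalIntegral.integral_mul_const,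
    intervalIntegral.integral_const_mul 2]

theorem weightedInner_le_sqrt_mul_sqrt (hQ : Q.PosSemidef) (hx : x₀ ≤ x₁)
    (hG : ContinuousOn G (Icc x₀ x₁)) (hH : ContinuousOn H (Icc x₀ x₁)) :
    weightedInner Q x₀ x₁ G H ≤ √(weightedInner Q x₀ x₁ G G) * √(weightedInner Q x₀ x₁ H H) :=
  le_sqrt_mul_sqrt_of_forall_quadratic_nonneg fun t =>
    weightedInner_add_smul hQ.isHermitian hx hG hH t ▸ weightedInner_self_nonneg hQ hx _

theorem integral_re_star_dotProduct_mulVec_deriv (hA : A.IsHermitian) (hx : x₀ ≤ x₁)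
    (hU : ∀ x ∈ Icc x₀ x₁, HasDerivWithinAt U (U' x) (Icc x₀ x₁) x)
    (hU' : ContinuousOn U' (Icc x₀ x₁)) :
    ∫ x in x₀..x₁, (star (U x) ⬝ᵥ A *ᵥ U' x).re =
      ((star (U x₁) ⬝ᵥ A *ᵥ U x₁).re - (star (U x₀) ⬝ᵥ A *ᵥ U x₀).re) / 2 := by
  have hUc : ContinuousOn U (Icc x₀ x₁) := fun x hx => (hU x hx).continuousWithinAt
  have hFTC := intervalIntegral.integral_eq_sub_of_hasDeriv_right_of_le hx
    (f := fun t => (star (U t) ⬝ᵥ A *ᵥ U t).re) (by fun_prop)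
    (fun x hx => (((hU x (Ioo_subset_Icc_self hx)).re_star_dotProduct_mulVec_self hA).hasDerivAt
      (Icc_mem_nhds hx.1 hx.2)).hasDerivWithinAt)
    ((intervalIntegrable_re_star_dotProduct_mulVec A hx hUc hU').const_mul 2)
  rw [intervalIntegral.integral_const_mul] at hFTC
  linarith

theorem weightedInner_energy_identity {z : ℂ} (hQ : Q.IsHermitian) (hA : A.IsHermitian)
    (hx : x₀ ≤ x₁) (hU : ∀ x ∈ Icc x₀ x₁, HasDerivWithinAt U (U' x) (Icc x₀ x₁) x)
    (hU' : ContinuousOn U' (Icc x₀ x₁)) (hF : ContinuousOn F (Icc x₀ x₁))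
    (heq : ∀ x ∈ Icc x₀ x₁, z • (Q *ᵥ U x) = A *ᵥ U' x + Q *ᵥ F x) :
    z.re * weightedInner Q x₀ x₁ U U =
      ((star (U x₁) ⬝ᵥ A *ᵥ U x₁).re - (star (U x₀) ⬝ᵥ A *ᵥ U x₀).re) / 4 +
        weightedInner Q x₀ x₁ U F := by
  have hUc : ContinuousOn U (Icc x₀ x₁) := fun x hx => (hU x hx).continuousWithinAt
  calc z.re * weightedInner Q x₀ x₁ U U
      = ∫ x in x₀..x₁, ((1 / 2) * (star (U x) ⬝ᵥ A *ᵥ U' x).re +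
          (1 / 2) * (star (U x) ⬝ᵥ Q *ᵥ F x).re) := by
        rw [weightedInner, ← intervalIntegral.integral_const_mul]
        refine intervalIntegral.integral_congr fun x hxI => ?_
        rw [uIcc_of_le hx] at hxI
        rw [mul_left_comm, hQ.re_mul_re_star_dotProduct_mulVec_self_of_eq (heq x hxI), mul_add]
    _ = _ := by
        rw [intervalIntegral.integral_add
          ((intervalIntegrable_re_star_dotProduct_mulVec A hx hUc hU').const_mul _)
          ((intervalIntegrable_re_star_dotProduct_mulVec Q hx hUc hF).const_mul _),
          intervalIntegral.integral_const_mul,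
          integral_re_star_dotProduct_mulVec_deriv hA hx hU hU', weightedInner]
        ring

end WeightedInner

theorem pml_strip_energy_estimate_general (m : ℕ) (P A : Matrix (Fin m) (Fin m) ℝ)
    (hP : P.PosDef) (hA : A.IsSymm)
    (d α γ a b : ℝ) (hd : 0 ≤ d) (hα : 0 ≤ α) (hγ : 0 < γ) (ha : 0 < a)
    (s S : ℂ) (hs : s = (a : ℂ) + (b : ℂ) * Complex.I)
    (hS : S = (γ : ℂ) * (1 + (d : ℂ) / (s + (α : ℂ))))
    (U U' F : ℝ → Fin m → ℂ)
    (hU : ∀ x ∈ Set.Icc (-1 : ℝ) 1, HasDerivWithinAt U (U' x) (Set.Icc (-1 : ℝ) 1) x)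
    (hU' : ContinuousOn U' (Set.Icc (-1 : ℝ) 1))
    (hF : ContinuousOn F (Set.Icc (-1 : ℝ) 1))
    (heq : ∀ x ∈ Set.Icc (-1 : ℝ) 1,
      (s * S) • ((P⁻¹.map Complex.ofReal).mulVec (U x)) =
        (A.map Complex.ofReal).mulVec (U' x) + (P⁻¹.map Complex.ofReal).mulVec (F x))
    (normP : (ℝ → Fin m → ℂ) → ℝ)
    (hnorm : ∀ G : ℝ → Fin m → ℂ, normP G = Real.sqrt (∫ x in (-1 : ℝ)..1,
      (1 / 2) * ((star (G x)) ⬝ᵥ ((P⁻¹.map Complex.ofReal).mulVec (G x))).re))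
    (BT : ℝ)
    (hBT : BT = (1 / 4) * (((star (U 1)) ⬝ᵥ ((A.map Complex.ofReal).mulVec (U 1))).re -
      ((star (U (-1))) ⬝ᵥ ((A.map Complex.ofReal).mulVec (U (-1)))).re)) :
    a * γ ≤ (s * S).re ∧ 0 < a * γ ∧
      (s * S).re * (normP U) ^ 2 ≤ normP U * normP F + BT ∧
      (BT ≤ 0 → normP U ≤ (1 / (a * γ)) * normP F) := by
  have hQ : (P⁻¹.map Complex.ofReal).PosSemidef := hP.inv.posSemidef.map_ofReal
  have hsa : s.re = a := by simp [hs]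
  have haγ : 0 < a * γ := mul_pos ha hγ
  have hre : a * γ ≤ (s * S).re := by
    rw [hS, ← hsa]
    exact mul_re_le_re_mul_pmlMetric hd hα hγ.le (hsa ▸ ha.le)
  have hUc : ContinuousOn U (Set.Icc (-1) 1) := fun x hx => (hU x hx).continuousWithinAt
  have hnormU_sq : normP U ^ 2 = weightedInner (P⁻¹.map Complex.ofReal) (-1) 1 U U := by
    rw [hnorm U]
    exact Real.sq_sqrt (weightedInner_self_nonneg hQ (by norm_num) U)
  have henergy :
      (s * S).re * normP U ^ 2 = BT + weightedInner (P⁻¹.map Complex.ofReal) (-1) 1 U F := by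
    rw [hnormU_sq, weightedInner_energy_identity hQ.isHermitian hA.isHermitian_map_ofReal
      (by norm_num) hU hU' hF heq, hBT]
    ring
  have hcs : weightedInner (P⁻¹.map Complex.ofReal) (-1) 1 U F ≤ normP U * normP F := by
    rw [hnorm U, hnorm F]
    exact weightedInner_le_sqrt_mul_sqrt hQ (by norm_num) hUc hF
  have hnormU : 0 ≤ normP U := hnorm U ▸ Real.sqrt_nonneg _
  have hnormF : 0 ≤ normP F := hnorm F ▸ Real.sqrt_nonneg _
  refine ⟨hre, haγ, by linarith, fun hBT0 => le_one_div_mul_of_mul_sq_le_mul haγ hnormU hnormF ?_⟩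
  calc a * γ * normP U ^ 2 ≤ (s * S).re * normP U ^ 2 := by gcongr
    _ ≤ normP U * normP F := by linarith

/-- 1D PML strip energy estimate in Laplace space: if `(sS)P⁻¹Ũ = AŨ′ + P⁻¹F̃` on
`[−1,1]` with `S = γ(1 + d/(s+α))`, `s = a+ib`, `a > 0`, then `Re(sS) ≥ aγ > 0` and
`Re(sS)‖Ũ‖_P² ≤ ‖Ũ‖_P‖F̃‖_P + BT`; if moreover `BT ≤ 0` then
`‖Ũ‖_P ≤ (1/(aγ))‖F̃‖_P`. -/
theorem pml_strip_energy_estimate (m : ℕ) (P A : Matrix (Fin m) (Fin m) ℝ)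
    (hP : P.PosDef) (hPs : P.IsSymm) (hA : A.IsSymm)
    (d α γ a b : ℝ) (hd : 0 ≤ d) (hα : 0 ≤ α) (hγ : 0 < γ) (ha : 0 < a)
    (s S : ℂ) (hs : s = (a : ℂ) + (b : ℂ) * Complex.I)
    (hS : S = (γ : ℂ) * (1 + (d : ℂ) / (s + (α : ℂ))))
    (U U' F : ℝ → Fin m → ℂ)
    (hU : ∀ x ∈ Set.Icc (-1 : ℝ) 1, HasDerivWithinAt U (U' x) (Set.Icc (-1 : ℝ) 1) x)
    (hU' : ContinuousOn U' (Set.Icc (-1 : ℝ) 1))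
    (hF : ContinuousOn F (Set.Icc (-1 : ℝ) 1))
    (heq : ∀ x ∈ Set.Icc (-1 : ℝ) 1,
      (s * S) • ((P⁻¹.map Complex.ofReal).mulVec (U x)) =
        (A.map Complex.ofReal).mulVec (U' x) + (P⁻¹.map Complex.ofReal).mulVec (F x))
    (normP : (ℝ → Fin m → ℂ) → ℝ)
    (hnorm : ∀ G : ℝ → Fin m → ℂ, normP G = Real.sqrt (∫ x in (-1 : ℝ)..1,
      (1 / 2) * ((star (G x)) ⬝ᵥ ((P⁻¹.map Complex.ofReal).mulVec (G x))).re))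
    (BT : ℝ)
    (hBT : BT = (1 / 4) * (((star (U 1)) ⬝ᵥ ((A.map Complex.ofReal).mulVec (U 1))).re -
      ((star (U (-1))) ⬝ᵥ ((A.map Complex.ofReal).mulVec (U (-1)))).re)) :
    a * γ ≤ (s * S).re ∧ 0 < a * γ ∧
      (s * S).re * (normP U) ^ 2 ≤ normP U * normP F + BT ∧
      (BT ≤ 0 → normP U ≤ (1 / (a * γ)) * normP F) :=
  pml_strip_energy_estimate_general m P A hP hA d α γ a b hd hα hγ ha s S hs hS U U' F hU hU' hF heq
    normP hnorm BT hBT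
end

section
/- (Laplace-space energy estimate for the acoustic PML, 1D constant-coefficient reduction.) Let ρ, κ > 0, c = √(κ/ρ), Z = ρc, let d ≥ 0 be constant, let s = a + ib ∈ ℂ with a > 0, and S = 1 + d/s. Let p̃ : [−1,1] → ℂ be twice continuously differentiable and F̂ : [−1,1] → ℂ continuous, f̂ : [−1,1] → ℂ continuously differentiable, satisfying (s²/κ)·p̃ − (1/S)·d/dx( (1/(ρS))·p̃′ ) = (s/κ)·F̂ − (1/S)·f̂′ on [−1,1], together with the boundary conditions ((1+r₋)/(2Z))·s·p̃(−1) − ((1−r₋)/2)·(1/S)·p̃′(−1) = 0 and ((1+r₊)/(2Z))·s·p̃(1) + ((1−r₊)/2)·(1/S)·p̃′(1) = 0 with |r₋| < 1 and |r₊| < 1. Define the weighted norms ‖g‖_w² = ∫_{−1}^{1} w·|g(x)|² dx, the energies Ẽ_p² = ‖s·p̃‖²_{1/κ} + ‖(1/S)·p̃′‖²_{1/ρ} and Ẽ_f² = ‖s·F̂‖²_{1/κ} + ‖(1/S)·f̂′‖²_{κ}, the quantity ε = Re(conj(sS)/S) − a ≥ 0, and the boundary term BT = Re[ (conj(s)/(ρS²))·(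 conj(p̃(−1))·p̃′(−1) − conj(p̃(1))·p̃′(1) ) ]. Then BT ≥ 0 and a·Ẽ_p² + ε·‖(1/S)·p̃′‖²_{1/ρ} + BT ≤ 2·Ẽ_p·Ẽ_f. -/
/-!
Multiply the PML equation by `conj (s p̃)` and integrate over `[-1, 1]`. Integrating the
second-order term by parts turns it into `conj (s S) / S · ‖p̃′ / S‖²_{1/ρ}` plus a boundary flux,
so the real part of the left side is `a ‖s p̃‖²_{1/κ} + (a + ε) ‖p̃′ / S‖²_{1/ρ} + BT`, while
Cauchy–Schwarz bounds the right side by `2 Ẽ_p Ẽ_f`. Since `s S = s + d`, one computes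
`ε = 2 (Im s)² d / |s + d|² ≥ 0`; and each impedance boundary condition makes `p̃′` a positive
multiple of `S s p̃`, so its flux is a positive multiple of `Re (1 / S) = Re (s / (s + d)) > 0`.
-/

open MeasureTheory Set ComplexConjugate

theorem integral_mul_le_sqrt_integral_sq_mul_sqrt_integral_sq {α : Type*} [MeasurableSpace α]
    {μ : Measure α} {u v : α → ℝ} (hu : Integrable (fun x => u x ^ 2) μ)
    (hv : Integrable (fun x => v x ^ 2) μ) (huv : Integrable (fun x => u x * v x) μ) :
    ∫ x, u x * v x ∂μ ≤ √(∫ x, u x ^ 2 ∂μ) * √(∫ x, v x ^ 2 ∂μ) := by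
  set A := ∫ x, u x ^ 2 ∂μ
  set B := ∫ x, v x ^ 2 ∂μ
  set C := ∫ x, u x * v x ∂μ
  have hA : 0 ≤ A := integral_nonneg fun x => sq_nonneg _
  have quadratic_nonneg : ∀ t : ℝ, 0 ≤ B * (t * t) + 2 * C * t + A := fun t => by
    have expand : ∫ x, (u x + t * v x) ^ 2 ∂μ = B * (t * t) + 2 * C * t + A := by
      simp_rw [show ∀ x, (u x + t * v x) ^ 2 = t ^ 2 * v x ^ 2 + 2 * t * (u x * v x) + u x ^ 2
        from fun x => by ring]
      have hvuv : Integrable (fun x => t ^ 2 * v x ^ 2 + 2 * t * (u x * v x)) μ :=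
        (hv.const_mul _).add (huv.const_mul _)
      rw [integral_add hvuv hu, integral_add (hv.const_mul _) (huv.const_mul _),
        integral_const_mul, integral_const_mul]
      ring
    exact expand ▸ integral_nonneg fun x => sq_nonneg _
  have hC : C ^ 2 ≤ A * B := by
    have := discrim_le_zero quadratic_nonneg
    rw [discrim] at this
    linarith
  rw [← Real.sqrt_mul hA]
  exact (le_abs_self C).trans (Real.abs_le_sqrt hC)

theorem intervalIntegral_sqrt_mul_norm_mul_norm_le {E F : Type*} [NormedAddCommGroup E]
    [NormedAddCommGroup F] {l r w₁ w₂ : ℝ} (hlr : l ≤ r) (hw₁ : 0 ≤ w₁) (hw₂ : 0 ≤ w₂)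
    {P : ℝ → E} {G : ℝ → F} (hP : ContinuousOn P (Icc l r)) (hG : ContinuousOn G (Icc l r)) :
    ∫ x in l..r, √(w₁ * w₂) * (‖P x‖ * ‖G x‖) ≤
      √(∫ x in l..r, w₁ * ‖P x‖ ^ 2) * √(∫ x in l..r, w₂ * ‖G x‖ ^ 2) := by
  have integrable {f : ℝ → ℝ} (hf : ContinuousOn f (Icc l r)) :
      Integrable f (volume.restrict (Ioc l r)) :=
    hf.integrableOn_Icc.mono_set Ioc_subset_Icc_self
  have hu : ContinuousOn (fun x => √w₁ * ‖P x‖) (Icc l r) := continuousOn_const.mul hP.norm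
  have hv : ContinuousOn (fun x => √w₂ * ‖G x‖) (Icc l r) := continuousOn_const.mul hG.norm
  have h₁ : ∀ x, w₁ * ‖P x‖ ^ 2 = (√w₁ * ‖P x‖) ^ 2 := fun x => by
    rw [mul_pow, Real.sq_sqrt hw₁]
  have h₂ : ∀ x, w₂ * ‖G x‖ ^ 2 = (√w₂ * ‖G x‖) ^ 2 := fun x => by
    rw [mul_pow, Real.sq_sqrt hw₂]
  have h₁₂ : ∀ x, √(w₁ * w₂) * (‖P x‖ * ‖G x‖) = √w₁ * ‖P x‖ * (√w₂ * ‖G x‖) := fun x => by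
    rw [Real.sqrt_mul hw₁]; ring
  simp_rw [h₁, h₂, h₁₂, intervalIntegral.integral_of_le hlr]
  exact integral_mul_le_sqrt_integral_sq_mul_sqrt_integral_sq (integrable (hu.pow 2))
    (integrable (hv.pow 2)) (integrable (hu.mul hv))

theorem re_integral_conj_mul_sub_le {l r κ : ℝ} (hlr : l ≤ r) (hκ : 0 < κ) {P G H : ℝ → ℂ}
    (hP : ContinuousOn P (Icc l r)) (hG : ContinuousOn G (Icc l r))
    (hH : ContinuousOn H (Icc l r)) :
    (∫ x in l..r, conj (P x) * (1 / κ * G x - H x)).re ≤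
      √(∫ x in l..r, 1 / κ * ‖P x‖ ^ 2) *
        (√(∫ x in l..r, 1 / κ * ‖G x‖ ^ 2) + √(∫ x in l..r, κ * ‖H x‖ ^ 2)) := by
  have hκ' : 0 ≤ 1 / κ := by positivity
  have hPG := intervalIntegral_sqrt_mul_norm_mul_norm_le hlr hκ' hκ' hP hG
  have hPH := intervalIntegral_sqrt_mul_norm_mul_norm_le hlr hκ' hκ.le hP hH
  rw [Real.sqrt_mul_self hκ'] at hPG
  rw [one_div_mul_cancel hκ.ne', Real.sqrt_one] at hPH
  have pointwise : ∀ x ∈ Icc l r, ‖conj (P x) * (1 / κ * G x - H x)‖ ≤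
      1 / κ * (‖P x‖ * ‖G x‖) + 1 * (‖P x‖ * ‖H x‖) := fun x _ => by
    rw [norm_mul, Complex.norm_conj]
    refine (mul_le_mul_of_nonneg_left (norm_sub_le _ _) (norm_nonneg _)).trans_eq ?_
    rw [norm_mul, norm_div, norm_one, Complex.norm_real, Real.norm_of_nonneg hκ.le]
    ring
  rw [← uIcc_of_le hlr] at hP hG hH
  have hPG' : IntervalIntegrable (fun x => 1 / κ * (‖P x‖ * ‖G x‖)) volume l r := by
    apply ContinuousOn.intervalIntegrable; fun_prop
  have hPH' : IntervalIntegrable (fun x => 1 * (‖P x‖ * ‖H x‖)) volume l r := by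
    apply ContinuousOn.intervalIntegrable; fun_prop
  calc (∫ x in l..r, conj (P x) * (1 / κ * G x - H x)).re
      ≤ ‖∫ x in l..r, conj (P x) * (1 / κ * G x - H x)‖ := Complex.re_le_norm _
    _ ≤ ∫ x in l..r, ‖conj (P x) * (1 / κ * G x - H x)‖ :=
        intervalIntegral.norm_integral_le_integral_norm hlr
    _ ≤ ∫ x in l..r, (1 / κ * (‖P x‖ * ‖G x‖) + 1 * (‖P x‖ * ‖H x‖)) := by
        refine intervalIntegral.integral_mono_on hlr ?_ (hPG'.add hPH') pointwise
        apply ContinuousOn.intervalIntegrable; fun_prop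
    _ = (∫ x in l..r, 1 / κ * (‖P x‖ * ‖G x‖)) + ∫ x in l..r, 1 * (‖P x‖ * ‖H x‖) :=
        intervalIntegral.integral_add hPG' hPH'
    _ ≤ _ := by rw [mul_add]; exact add_le_add hPG hPH

section PMLMetric

variable {s : ℂ} {d : ℝ}

theorem normSq_add_ofReal_pos (hs : 0 < s.re) (hd : 0 ≤ d) : 0 < Complex.normSq (s + d) :=
  Complex.normSq_pos.2 fun h => by
    have := congrArg Complex.re h
    simp only [Complex.add_re, Complex.ofReal_re, Complex.zero_re] at this
    linarith

theorem re_one_div_one_add_div_pos (hs : 0 < s.re) (hd : 0 ≤ d) :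
    0 < (1 / (1 + (d : ℂ) / s)).re := by
  have hs0 : s ≠ 0 := fun h => by simp [h] at hs
  rw [one_add_div hs0, one_div_div, Complex.div_re]
  simp only [Complex.add_re, Complex.add_im, Complex.ofReal_re, Complex.ofReal_im, add_zero,
    ← add_div]
  exact div_pos (by nlinarith) (normSq_add_ofReal_pos hs hd)

theorem re_le_re_conj_mul_div_one_add_div (hs : 0 < s.re) (hd : 0 ≤ d) :
    s.re ≤ (conj (s * (1 + (d : ℂ) / s)) / (1 + (d : ℂ) / s)).re := by
  have hs0 : s ≠ 0 := fun h => by simp [h] at hs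
  rw [one_add_div hs0, mul_div_cancel₀ _ hs0, div_div_eq_mul_div, Complex.div_re]
  simp only [Complex.mul_re, Complex.mul_im, Complex.conj_re, Complex.conj_im, Complex.add_re,
    Complex.add_im, Complex.ofReal_re, Complex.ofReal_im, add_zero, ← add_div]
  rw [le_div_iff₀ (normSq_add_ofReal_pos hs hd), Complex.normSq_apply]
  simp only [Complex.add_re, Complex.add_im, Complex.ofReal_re, Complex.ofReal_im, add_zero]
  nlinarith [mul_nonneg hd (sq_nonneg s.im)]

end PMLMetric

theorem re_boundary_flux_nonneg {ρ Z r : ℝ} {s S u v : ℂ} (hρ : 0 < ρ) (hZ : 0 < Z)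
    (hr : |r| < 1) (hS : 0 < (1 / S).re)
    (hbc : (1 + r) / (2 * Z) * s * u - (1 - r) / 2 * (1 / S) * v = 0) :
    0 ≤ (conj s / (ρ * S ^ 2) * (conj u * v)).re := by
  obtain ⟨hr₁, hr₂⟩ := abs_lt.1 hr
  have hS0 : S ≠ 0 := by rintro rfl; simp at hS
  have hr0 : (1 - r : ℂ) ≠ 0 := by exact_mod_cast (sub_pos.2 hr₂).ne'
  have hv : v = (1 + r) / ((1 - r) * Z) * S * s * u := by
    field_simp at hbc ⊢
    linear_combination -hbc
  have hflux : conj s / (ρ * S ^ 2) * (conj u * v) =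
      (((1 + r) / ((1 - r) * Z * ρ) * ‖s‖ ^ 2 * ‖u‖ ^ 2 : ℝ) : ℂ) * (1 / S) := by
    rw [hv]
    push_cast
    rw [← Complex.conj_mul' s, ← Complex.conj_mul' u]
    field_simp
  rw [hflux, Complex.re_ofReal_mul]
  have : 0 < (1 + r) / ((1 - r) * Z * ρ) :=
    div_pos (by linarith) (mul_pos (mul_pos (by linarith) hZ) hρ)
  positivity

section EnergyIdentity

variable {l r : ℝ} {p p' p'' : ℝ → ℂ}

theorem integral_conj_mul_deriv_deriv (hlr : l ≤ r)
    (hp : ∀ x ∈ Icc l r, HasDerivWithinAt p (p' x) (Icc l r) x)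
    (hp' : ∀ x ∈ Icc l r, HasDerivWithinAt p' (p'' x) (Icc l r) x)
    (hp'' : ContinuousOn p'' (Icc l r)) :
    ∫ x in l..r, conj (p x) * p'' x =
      conj (p r) * p' r - conj (p l) * p' l - ((∫ x in l..r, ‖p' x‖ ^ 2 : ℝ) : ℂ) := by
  have hp'c : ContinuousOn p' (Icc l r) := fun x hx => (hp' x hx).continuousWithinAt
  rw [← uIcc_of_le hlr] at hp hp' hp'' hp'c
  rw [intervalIntegral.integral_mul_deriv_eq_deriv_mul_of_hasDerivWithinAt
    (u := fun x => conj (p x)) (u' := fun x => conj (p' x)) (fun x hx => (hp x hx).star) hp'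
    hp'c.star.intervalIntegrable hp''.intervalIntegrable]
  simp_rw [← intervalIntegral.integral_ofReal, Complex.ofReal_pow, Complex.conj_mul']

theorem integral_conj_mul_eq_of_pml_equation (hlr : l ≤ r) {ρ κ : ℝ} (hρ : ρ ≠ 0)
    (hκ : κ ≠ 0) {s S : ℂ} (hS : S ≠ 0) {F g : ℝ → ℂ}
    (hp : ∀ x ∈ Icc l r, HasDerivWithinAt p (p' x) (Icc l r) x)
    (hp' : ∀ x ∈ Icc l r, HasDerivWithinAt p' (p'' x) (Icc l r) x)
    (hp'' : ContinuousOn p'' (Icc l r))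
    (heq : ∀ x ∈ Icc l r, s ^ 2 / κ * p x - 1 / S * (1 / (ρ * S) * p'' x) =
      s / κ * F x - 1 / S * g x) :
    ∫ x in l..r, conj (s * p x) * (s / κ * F x - 1 / S * g x) =
      s * ((∫ x in l..r, 1 / κ * ‖s * p x‖ ^ 2 : ℝ) : ℂ) +
        conj (s * S) / S * ((∫ x in l..r, 1 / ρ * ‖1 / S * p' x‖ ^ 2 : ℝ) : ℂ) +
        conj s / (ρ * S ^ 2) * (conj (p l) * p' l - conj (p r) * p' r) := by
  have hpc : ContinuousOn p (Icc l r) := fun x hx => (hp x hx).continuousWithinAt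
  have hρ' : (ρ : ℂ) ≠ 0 := by exact_mod_cast hρ
  have hκ' : (κ : ℂ) ≠ 0 := by exact_mod_cast hκ
  have pointwise : ∀ x ∈ uIcc l r, conj (s * p x) * (s / κ * F x - 1 / S * g x) =
      s * ((1 / κ * ‖s * p x‖ ^ 2 : ℝ) : ℂ) - conj s / (ρ * S ^ 2) * (conj (p x) * p'' x) := by
    intro x hx
    rw [← heq x (uIcc_of_le hlr ▸ hx)]
    push_cast
    rw [← Complex.conj_mul' (s * p x), map_mul]
    field_simp
  have hA : IntervalIntegrable (fun x => s * ((1 / κ * ‖s * p x‖ ^ 2 : ℝ) : ℂ)) volume l r :=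
    ContinuousOn.intervalIntegrable (by rw [uIcc_of_le hlr]; fun_prop)
  have hB : IntervalIntegrable (fun x => conj s / (ρ * S ^ 2) * (conj (p x) * p'' x))
      volume l r :=
    ContinuousOn.intervalIntegrable (by rw [uIcc_of_le hlr]; fun_prop)
  have hW : ∫ x in l..r, 1 / ρ * ‖1 / S * p' x‖ ^ 2 =
      1 / ρ * ‖1 / S‖ ^ 2 * ∫ x in l..r, ‖p' x‖ ^ 2 := by
    simp_rw [norm_mul _ (p' _), mul_pow, ← mul_assoc]
    exact intervalIntegral.integral_const_mul _ _
  rw [intervalIntegral.integral_congr pointwise, intervalIntegral.integral_sub hA hB,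
    intervalIntegral.integral_const_mul, intervalIntegral.integral_const_mul,
    intervalIntegral.integral_ofReal, integral_conj_mul_deriv_deriv hlr hp hp' hp'', hW]
  generalize (∫ x in l..r, 1 / κ * ‖s * p x‖ ^ 2) = X
  generalize (∫ x in l..r, ‖p' x‖ ^ 2) = W
  have hS' : conj S ≠ 0 := (map_ne_zero _).2 hS
  push_cast
  rw [← Complex.mul_conj' (1 / S)]
  simp only [map_mul, map_div₀, map_one]
  field_simp
  ring

theorem pml_energy_inequality (hlr : l ≤ r) {ρ κ : ℝ} (hρ : 0 < ρ) (hκ : 0 < κ) {s S : ℂ}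
    (hS : S ≠ 0) {F g : ℝ → ℂ}
    (hp : ∀ x ∈ Icc l r, HasDerivWithinAt p (p' x) (Icc l r) x)
    (hp' : ∀ x ∈ Icc l r, HasDerivWithinAt p' (p'' x) (Icc l r) x)
    (hp'' : ContinuousOn p'' (Icc l r)) (hF : ContinuousOn F (Icc l r))
    (hg : ContinuousOn g (Icc l r))
    (heq : ∀ x ∈ Icc l r, s ^ 2 / κ * p x - 1 / S * (1 / (ρ * S) * p'' x) =
      s / κ * F x - 1 / S * g x) :
    s.re * (∫ x in l..r, 1 / κ * ‖s * p x‖ ^ 2) +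
        (conj (s * S) / S).re * (∫ x in l..r, 1 / ρ * ‖1 / S * p' x‖ ^ 2) +
        (conj s / (ρ * S ^ 2) * (conj (p l) * p' l - conj (p r) * p' r)).re ≤
      2 * √((∫ x in l..r, 1 / κ * ‖s * p x‖ ^ 2) + ∫ x in l..r, 1 / ρ * ‖1 / S * p' x‖ ^ 2) *
        √((∫ x in l..r, 1 / κ * ‖s * F x‖ ^ 2) + ∫ x in l..r, κ * ‖1 / S * g x‖ ^ 2) := by
  have hpc : ContinuousOn p (Icc l r) := fun x hx => (hp x hx).continuousWithinAt
  have identity := congrArg Complex.re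
    (integral_conj_mul_eq_of_pml_equation hlr hρ.ne' hκ.ne' hS hp hp' hp'' heq)
  rw [Complex.add_re, Complex.add_re, Complex.re_mul_ofReal, Complex.re_mul_ofReal] at identity
  have bound := re_integral_conj_mul_sub_le hlr hκ (P := fun x => s * p x)
    (G := fun x => s * F x) (H := fun x => 1 / S * g x) (continuousOn_const.mul hpc)
    (continuousOn_const.mul hF) (continuousOn_const.mul hg)
  rw [intervalIntegral.integral_congr
    (g := fun x => conj (s * p x) * (s / κ * F x - 1 / S * g x)) fun x _ => by ring,
    identity] at bound
  refine bound.trans ?_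
  have hW : 0 ≤ ∫ x in l..r, 1 / ρ * ‖1 / S * p' x‖ ^ 2 :=
    intervalIntegral.integral_nonneg hlr fun x _ => by positivity
  have hY₁ : 0 ≤ ∫ x in l..r, 1 / κ * ‖s * F x‖ ^ 2 :=
    intervalIntegral.integral_nonneg hlr fun x _ => by positivity
  have hY₂ : 0 ≤ ∫ x in l..r, κ * ‖1 / S * g x‖ ^ 2 :=
    intervalIntegral.integral_nonneg hlr fun x _ => by positivity
  calc _ ≤ √((∫ x in l..r, 1 / κ * ‖s * p x‖ ^ 2) + ∫ x in l..r, 1 / ρ * ‖1 / S * p' x‖ ^ 2) *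
          (√((∫ x in l..r, 1 / κ * ‖s * F x‖ ^ 2) + ∫ x in l..r, κ * ‖1 / S * g x‖ ^ 2) +
            √((∫ x in l..r, 1 / κ * ‖s * F x‖ ^ 2) + ∫ x in l..r, κ * ‖1 / S * g x‖ ^ 2)) := by
        gcongr <;> linarith
    _ = _ := by ring

end EnergyIdentity

theorem acoustic_pml_energy_estimate_1d_general
    (ρ κ c Z : ℝ) (hρ : 0 < ρ) (hκ : 0 < κ)
    (hc : c = Real.sqrt (κ / ρ)) (hZ : Z = ρ * c)
    (d a b : ℝ) (hd : 0 ≤ d) (ha : 0 < a)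
    (s S : ℂ) (hs : s = (a : ℂ) + (b : ℂ) * Complex.I) (hS : S = 1 + (d : ℂ) / s)
    (rm rp : ℝ) (hrm : |rm| < 1) (hrp : |rp| < 1)
    (p p' p'' F f' : ℝ → ℂ)
    (hp1 : ∀ x ∈ Set.Icc (-1 : ℝ) 1, HasDerivWithinAt p (p' x) (Set.Icc (-1 : ℝ) 1) x)
    (hp2 : ∀ x ∈ Set.Icc (-1 : ℝ) 1, HasDerivWithinAt p' (p'' x) (Set.Icc (-1 : ℝ) 1) x)
    (hp2c : ContinuousOn p'' (Set.Icc (-1 : ℝ) 1))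
    (hFc : ContinuousOn F (Set.Icc (-1 : ℝ) 1))
    (hf'c : ContinuousOn f' (Set.Icc (-1 : ℝ) 1))
    (heq : ∀ x ∈ Set.Icc (-1 : ℝ) 1,
      (s ^ 2 / (κ : ℂ)) * p x - (1 / S) * ((1 / ((ρ : ℂ) * S)) * p'' x) =
        (s / (κ : ℂ)) * F x - (1 / S) * f' x)
    (hbcm : ((1 + (rm : ℂ)) / (2 * (Z : ℂ))) * s * p (-1) -
      ((1 - (rm : ℂ)) / 2) * (1 / S) * p' (-1) = 0)
    (hbcp : ((1 + (rp : ℂ)) / (2 * (Z : ℂ))) * s * p 1 +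
      ((1 - (rp : ℂ)) / 2) * (1 / S) * p' 1 = 0)
    (Ep Ef eps BT : ℝ)
    (hEp : Ep = Real.sqrt ((∫ x in (-1 : ℝ)..1, (1 / κ) * ‖s * p x‖ ^ 2) +
      ∫ x in (-1 : ℝ)..1, (1 / ρ) * ‖(1 / S) * p' x‖ ^ 2))
    (hEf : Ef = Real.sqrt ((∫ x in (-1 : ℝ)..1, (1 / κ) * ‖s * F x‖ ^ 2) +
      ∫ x in (-1 : ℝ)..1, κ * ‖(1 / S) * f' x‖ ^ 2))
    (heps : eps = ((starRingEnd ℂ) (s * S) / S).re - a)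
    (hBT : BT = (((starRingEnd ℂ) s / ((ρ : ℂ) * S ^ 2)) *
      ((starRingEnd ℂ) (p (-1)) * p' (-1) - (starRingEnd ℂ) (p 1) * p' 1)).re) :
    0 ≤ eps ∧ 0 ≤ BT ∧
      a * Ep ^ 2 + eps * (∫ x in (-1 : ℝ)..1, (1 / ρ) * ‖(1 / S) * p' x‖ ^ 2) +
        BT ≤ 2 * Ep * Ef := by
  have hsre : s.re = a := by simp [hs]
  have hReS : 0 < (1 / S).re := hS ▸ re_one_div_one_add_div_pos (hsre ▸ ha) hd
  have hS0 : S ≠ 0 := by rintro rfl; simp at hReS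
  have hZ0 : 0 < Z := by
    have := div_pos hκ hρ
    rw [hZ, hc]
    positivity
  refine ⟨?_, ?_, ?_⟩
  · rw [heps, ← hsre, hS]
    exact sub_nonneg.2 (re_le_re_conj_mul_div_one_add_div (hsre ▸ ha) hd)
  · have hbcp' : (1 + rp) / (2 * Z) * s * p 1 - (1 - rp) / 2 * (1 / S) * -p' 1 = 0 := by
      linear_combination hbcp
    rw [hBT, mul_sub, sub_eq_add_neg, ← mul_neg, Complex.add_re, ← mul_neg]
    exact add_nonneg (re_boundary_flux_nonneg hρ hZ0 hrm hReS hbcm)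
      (re_boundary_flux_nonneg hρ hZ0 hrp hReS hbcp')
  · have key := pml_energy_inequality (by norm_num) hρ hκ hS0 hp1 hp2 hp2c hFc hf'c heq
    rw [hsre, show ((starRingEnd ℂ) (s * S) / S).re = a + eps by rw [heps]; ring, ← hBT,
      ← hEp, ← hEf] at key
    have hEp2 : Ep ^ 2 = (∫ x in (-1 : ℝ)..1, (1 / κ) * ‖s * p x‖ ^ 2) +
        ∫ x in (-1 : ℝ)..1, (1 / ρ) * ‖(1 / S) * p' x‖ ^ 2 := by
      rw [hEp, Real.sq_sqrt]
      exact add_nonneg (intervalIntegral.integral_nonneg (by norm_num) fun x _ => by positivity)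
        (intervalIntegral.integral_nonneg (by norm_num) fun x _ => by positivity)
    linear_combination key + a * hEp2

/-- Laplace-space energy estimate for the acoustic PML (1D constant-coefficient
reduction): with `S = 1 + d/s`, `s = a + ib`, `a > 0`, solutions of
`(s²/κ)p̃ − (1/S)((1/(ρS))p̃′)′ = (s/κ)F̂ − (1/S)f̂′` on `[−1,1]` with the PML boundary
conditions (reflection coefficients `|r| < 1`) satisfy `BT ≥ 0` and
`a·Ẽ_p² + ε‖(1/S)p̃′‖²_{1/ρ} + BT ≤ 2Ẽ_pẼ_f` where `ε = Re(conj(sS)/S) − a ≥ 0`. -/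
theorem acoustic_pml_energy_estimate_1d
    (ρ κ c Z : ℝ) (hρ : 0 < ρ) (hκ : 0 < κ)
    (hc : c = Real.sqrt (κ / ρ)) (hZ : Z = ρ * c)
    (d a b : ℝ) (hd : 0 ≤ d) (ha : 0 < a)
    (s S : ℂ) (hs : s = (a : ℂ) + (b : ℂ) * Complex.I) (hS : S = 1 + (d : ℂ) / s)
    (rm rp : ℝ) (hrm : |rm| < 1) (hrp : |rp| < 1)
    (p p' p'' F f f' : ℝ → ℂ)
    (hp1 : ∀ x ∈ Set.Icc (-1 : ℝ) 1, HasDerivWithinAt p (p' x) (Set.Icc (-1 : ℝ) 1) x)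
    (hp2 : ∀ x ∈ Set.Icc (-1 : ℝ) 1, HasDerivWithinAt p' (p'' x) (Set.Icc (-1 : ℝ) 1) x)
    (hp2c : ContinuousOn p'' (Set.Icc (-1 : ℝ) 1))
    (hFc : ContinuousOn F (Set.Icc (-1 : ℝ) 1))
    (hf1 : ∀ x ∈ Set.Icc (-1 : ℝ) 1, HasDerivWithinAt f (f' x) (Set.Icc (-1 : ℝ) 1) x)
    (hf'c : ContinuousOn f' (Set.Icc (-1 : ℝ) 1))
    (heq : ∀ x ∈ Set.Icc (-1 : ℝ) 1,
      (s ^ 2 / (κ : ℂ)) * p x - (1 / S) * ((1 / ((ρ : ℂ) * S)) * p'' x) =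
        (s / (κ : ℂ)) * F x - (1 / S) * f' x)
    (hbcm : ((1 + (rm : ℂ)) / (2 * (Z : ℂ))) * s * p (-1) -
      ((1 - (rm : ℂ)) / 2) * (1 / S) * p' (-1) = 0)
    (hbcp : ((1 + (rp : ℂ)) / (2 * (Z : ℂ))) * s * p 1 +
      ((1 - (rp : ℂ)) / 2) * (1 / S) * p' 1 = 0)
    (Ep Ef eps BT : ℝ)
    (hEp : Ep = Real.sqrt ((∫ x in (-1 : ℝ)..1, (1 / κ) * ‖s * p x‖ ^ 2) +
      ∫ x in (-1 : ℝ)..1, (1 / ρ) * ‖(1 / S) * p' x‖ ^ 2))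
    (hEf : Ef = Real.sqrt ((∫ x in (-1 : ℝ)..1, (1 / κ) * ‖s * F x‖ ^ 2) +
      ∫ x in (-1 : ℝ)..1, κ * ‖(1 / S) * f' x‖ ^ 2))
    (heps : eps = ((starRingEnd ℂ) (s * S) / S).re - a)
    (hBT : BT = (((starRingEnd ℂ) s / ((ρ : ℂ) * S ^ 2)) *
      ((starRingEnd ℂ) (p (-1)) * p' (-1) - (starRingEnd ℂ) (p 1) * p' 1)).re) :
    0 ≤ eps ∧ 0 ≤ BT ∧
      a * Ep ^ 2 + eps * (∫ x in (-1 : ℝ)..1, (1 / ρ) * ‖(1 / S) * p' x‖ ^ 2) +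
        BT ≤ 2 * Ep * Ef :=
  acoustic_pml_energy_estimate_1d_general ρ κ c Z hρ hκ hc hZ d a b hd ha s S hs hS rm rp hrm hrp p
    p' p'' F f' hp1 hp2 hp2c hFc hf'c heq hbcm hbcp Ep Ef eps BT hEp hEf heps hBT
end
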